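/- Suppose the pair (T, G^{(1)}) is pointwise of weak Lie type. Let z ∈ M with d := ord(z) < ∞ and let N ≥ 0. If for every k ≥ 1 the closure of T^{(k)}(z) contains M_{N+k+d}, then for every k > N the closure of the orbit G^{(k)}z contains {z} + M_{N+k+d}. -/
import Mathlib


variable {𝕜 M : Type*} [CommRing 𝕜] [AddCommGroup M] [Module 𝕜 M]

/-- `End^{(i)}` : the 𝕜-submodule of endomorphisms shifting the filtration by `i`. -/
def EndS (Mf : ℕ → Submodule 𝕜 M) (i : ℕ) : Submodule 𝕜 (Module.End 𝕜 M) where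
  carrier := {φ | ∀ j : ℕ, ∀ x ∈ Mf j, φ x ∈ Mf (j + i)}
  add_mem' := by
    intro a b ha hb j x hx
    simpa [LinearMap.add_apply] using add_mem (ha j x hx) (hb j x hx)
  zero_mem' := by
    intro j x hx
    simpa using (Mf (j + i)).zero_mem
  smul_mem' := by
    intro c a ha j x hx
    simpa [LinearMap.smul_apply] using Submodule.smul_mem _ c (ha j x hx)

/-- `GL^{(i)}` (for `i ≥ 1`): units `u` such that `u` and `u⁻¹` preserve the filtration
and `u - 1`, `u⁻¹ - 1` lie in `End^{(i)}`. -/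
def GLFil (Mf : ℕ → Submodule 𝕜 M) (i : ℕ) : Set (Module.End 𝕜 M)ˣ :=
  {u | (∀ j : ℕ, ∀ x ∈ Mf j, (u : Module.End 𝕜 M) x ∈ Mf j) ∧
    (∀ j : ℕ, ∀ x ∈ Mf j, ((u⁻¹ : (Module.End 𝕜 M)ˣ) : Module.End 𝕜 M) x ∈ Mf j) ∧
    ((u : Module.End 𝕜 M) - 1) ∈ EndS Mf i ∧
    (((u⁻¹ : (Module.End 𝕜 M)ˣ) : Module.End 𝕜 M) - 1) ∈ EndS Mf i}

/-- `ord(z) = sup {j : z ∈ M_j} ∈ ℕ ∪ {∞}`. -/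
noncomputable def ordM (Mf : ℕ → Submodule 𝕜 M) (z : M) : ℕ∞ :=
  ⨆ j ∈ {j : ℕ | z ∈ Mf j}, (j : ℕ∞)

/-- `ord(φ) = sup {i : φ ∈ End^{(i)}} ∈ ℕ ∪ {∞}`. -/
noncomputable def ordE (Mf : ℕ → Submodule 𝕜 M) (φ : Module.End 𝕜 M) : ℕ∞ :=
  ⨆ i ∈ {i : ℕ | φ ∈ EndS Mf i}, (i : ℕ∞)

/-- Closure of a subset in the filtration topology: `X̄ = ⋂_{j≥1} (X + M_j)`. -/
def clFil (Mf : ℕ → Submodule 𝕜 M) (X : Set M) : Set M :=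
  {m | ∀ j : ℕ, 1 ≤ j → ∃ x ∈ X, m - x ∈ Mf j}

/-- `T^{(i)}(z) = {ξ(z) : ξ ∈ T ∩ End^{(i)}}`. -/
def TOrbit (Mf : ℕ → Submodule 𝕜 M) (T : Submodule 𝕜 (Module.End 𝕜 M)) (i : ℕ)
    (z : M) : Set M :=
  {m | ∃ ξ : Module.End 𝕜 M, ξ ∈ T ∧ ξ ∈ EndS Mf i ∧ ξ z = m}

/-- `G^{(i)}z = {u(z) : u ∈ G ∩ GL^{(i)}}`. -/
def GOrbit (Mf : ℕ → Submodule 𝕜 M) (G : Subgroup (Module.End 𝕜 M)ˣ) (i : ℕ)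
    (z : M) : Set M :=
  {m | ∃ u : (Module.End 𝕜 M)ˣ, u ∈ G ∧ u ∈ GLFil Mf i ∧ (u : Module.End 𝕜 M) z = m}

/-- The pair `(T, G)` is pointwise of Lie type for the index `i`. -/
def IsPointwiseLie (Mf : ℕ → Submodule 𝕜 M) (T : Submodule 𝕜 (Module.End 𝕜 M))
    (G : Subgroup (Module.End 𝕜 M)ˣ) (i : ℕ) : Prop :=
  (∀ ξ : Module.End 𝕜 M, ξ ∈ T → ξ ∈ EndS Mf i → ∀ z : M,
    ∃ u : (Module.End 𝕜 M)ˣ, u ∈ G ∧ u ∈ GLFil Mf i ∧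
      (ordM Mf (ξ z) < ⊤ →
        ordM Mf (((u : Module.End 𝕜 M) - 1 - ξ) z) > ordM Mf (ξ z))) ∧
  (∀ u : (Module.End 𝕜 M)ˣ, u ∈ G → u ∈ GLFil Mf i → ∀ z : M,
    ∃ ξ : Module.End 𝕜 M, ξ ∈ T ∧ ξ ∈ EndS Mf i ∧
      (ordM Mf (((u : Module.End 𝕜 M) - 1) z) < ⊤ →
        ordM Mf (((u : Module.End 𝕜 M) - 1 - ξ) z)
          > ordM Mf (((u : Module.End 𝕜 M) - 1) z)))

/-- The pair `(T, G)` is pointwise of weak Lie type. -/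
def IsPointwiseWeakLie (Mf : ℕ → Submodule 𝕜 M) (T : Submodule 𝕜 (Module.End 𝕜 M))
    (G : Subgroup (Module.End 𝕜 M)ˣ) : Prop :=
  ∀ i : ℕ, 1 ≤ i →
    (∀ ξ : Module.End 𝕜 M, ξ ∈ T → ξ ∈ EndS Mf i → ∀ z : M,
      ∃ u : (Module.End 𝕜 M)ˣ, u ∈ G ∧ u ∈ GLFil Mf i ∧
        (ordM Mf (ξ z) < ⊤ →
          ordM Mf (((u : Module.End 𝕜 M) - 1 - ξ) z)
            ≥ 2 * ordE Mf ξ + ordM Mf z)) ∧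
    (∀ u : (Module.End 𝕜 M)ˣ, u ∈ G → u ∈ GLFil Mf i → ∀ z : M,
      ∃ ξ : Module.End 𝕜 M, ξ ∈ T ∧ ξ ∈ EndS Mf i ∧
        (ordM Mf (((u : Module.End 𝕜 M) - 1) z) < ⊤ →
          ordM Mf (((u : Module.End 𝕜 M) - 1 - ξ) z)
            ≥ 2 * ordE Mf ((u : Module.End 𝕜 M) - 1) + ordM Mf z))

lemma mem_EndS_iff (Mf : ℕ → Submodule 𝕜 M) (i : ℕ) (φ : Module.End 𝕜 M) :
    φ ∈ EndS Mf i ↔ ∀ j : ℕ, ∀ x ∈ Mf j, φ x ∈ Mf (j + i) := Iff.rfl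

lemma EndS_anti (Mf : ℕ → Submodule 𝕜 M) (hMf : Antitone Mf) {i i' : ℕ} (h : i' ≤ i) :
    EndS Mf i ≤ EndS Mf i' := by
  intro φ hφ j x hx
  exact hMf (by omega) (hφ j x hx)

lemma mem_of_le_ordM (Mf : ℕ → Submodule 𝕜 M) (hMf0 : Mf 0 = ⊤) (hMf : Antitone Mf)
    (v : M) (m : ℕ) (h : (m : ℕ∞) ≤ ordM Mf v) : v ∈ Mf m := by
  rcases Nat.eq_zero_or_pos m with rfl | hm
  · simp [hMf0]
  · by_contra hv
    have hb : ordM Mf v ≤ ((m - 1 : ℕ) : ℕ∞) := by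
      refine iSup₂_le fun j hj => ?_
      have hjm : j < m := by
        by_contra hjm
        exact hv (hMf (not_lt.mp hjm) hj)
      exact_mod_cast Nat.le_sub_one_of_lt hjm
    have h2 : (m : ℕ∞) ≤ ((m - 1 : ℕ) : ℕ∞) := h.trans hb
    have : m ≤ m - 1 := by exact_mod_cast h2
    omega

lemma le_ordM_of_mem (Mf : ℕ → Submodule 𝕜 M) {v : M} {m : ℕ} (h : v ∈ Mf m) :
    (m : ℕ∞) ≤ ordM Mf v :=
  le_iSup₂ (f := fun j (_ : j ∈ {j : ℕ | v ∈ Mf j}) => (j : ℕ∞)) m h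

lemma le_ordE_of_mem (Mf : ℕ → Submodule 𝕜 M) {φ : Module.End 𝕜 M} {i : ℕ}
    (h : φ ∈ EndS Mf i) : (i : ℕ∞) ≤ ordE Mf φ :=
  le_iSup₂ (f := fun j (_ : j ∈ {j : ℕ | φ ∈ EndS Mf j}) => (j : ℕ∞)) i h

lemma one_mem_GLFil (Mf : ℕ → Submodule 𝕜 M) (i : ℕ) : (1 : (Module.End 𝕜 M)ˣ) ∈ GLFil Mf i := by
  refine ⟨fun j x hx => by simpa using hx, fun j x hx => by simpa using hx, ?_, ?_⟩ <;>
    · simpa using (EndS Mf i).zero_mem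

lemma GLFil_anti (Mf : ℕ → Submodule 𝕜 M) (hMf : Antitone Mf) {i i' : ℕ} (h : i' ≤ i)
    {u : (Module.End 𝕜 M)ˣ} (hu : u ∈ GLFil Mf i) : u ∈ GLFil Mf i' :=
  ⟨hu.1, hu.2.1, EndS_anti Mf hMf h hu.2.2.1, EndS_anti Mf hMf h hu.2.2.2⟩

lemma EndS_mul_sub_one (Mf : ℕ → Submodule 𝕜 M) {i : ℕ} {a b : Module.End 𝕜 M}
    (ha1 : ∀ j : ℕ, ∀ x ∈ Mf j, a x ∈ Mf j)
    (ha : a - 1 ∈ EndS Mf i) (hb : b - 1 ∈ EndS Mf i) :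
    a * b - 1 ∈ EndS Mf i := by
  intro j x hx
  have h1 : a ((b - 1) x) ∈ Mf (j + i) := ha1 _ _ (hb j x hx)
  have h2 : (a - 1) x ∈ Mf (j + i) := ha j x hx
  have he : (a * b - 1) x = a ((b - 1) x) + (a - 1) x := by
    simp only [LinearMap.sub_apply, Module.End.mul_apply, Module.End.one_apply, map_sub]
    abel
  rw [he]
  exact add_mem h1 h2

lemma GLFil_mul (Mf : ℕ → Submodule 𝕜 M) {i : ℕ} {u v : (Module.End 𝕜 M)ˣ}
    (hu : u ∈ GLFil Mf i) (hv : v ∈ GLFil Mf i) : u * v ∈ GLFil Mf i := by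
  obtain ⟨hu1, hu2, hu3, hu4⟩ := hu
  obtain ⟨hv1, hv2, hv3, hv4⟩ := hv
  refine ⟨?_, ?_, ?_, ?_⟩
  · intro j x hx
    simpa [Units.val_mul, Module.End.mul_apply] using hu1 j _ (hv1 j x hx)
  · intro j x hx
    simpa [mul_inv_rev, Units.val_mul, Module.End.mul_apply] using hv2 j _ (hu2 j x hx)
  · simpa [Units.val_mul] using EndS_mul_sub_one Mf hu1 hu3 hv3
  · simpa [mul_inv_rev, Units.val_mul] using EndS_mul_sub_one Mf hv2 hv4 hu4

lemma statement10_aux (Mf : ℕ → Submodule 𝕜 M) (hMf0 : Mf 0 = ⊤) (hMf : Antitone Mf)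
    (G : Subgroup (Module.End 𝕜 M)ˣ)
    (T : Submodule 𝕜 (Module.End 𝕜 M))
    (hLie : IsPointwiseWeakLie Mf T G)
    (z : M) (d : ℕ) (hz : ordM Mf z = (d : ℕ∞)) (N : ℕ)
    (hTz : ∀ k : ℕ, 1 ≤ k → ↑(Mf (N + k + d)) ⊆ clFil Mf (TOrbit Mf T k z))
    (k : ℕ) (hkN : N < k) :
    ∀ m : ℕ, ∀ k' : ℕ, k ≤ k' → ∀ j : ℕ, j ≤ N + k' + d + m →
      ∀ r ∈ Mf (N + k' + d), ∀ y : M, y - z ∈ Mf (d + k) →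
      ∃ u : (Module.End 𝕜 M)ˣ, u ∈ G ∧ u ∈ GLFil Mf k' ∧
        r - ((u : Module.End 𝕜 M) y - y) ∈ Mf j := by
  have hzd : z ∈ Mf d := mem_of_le_ordM Mf hMf0 hMf z d hz.ge
  intro m
  induction m with
  | zero =>
    intro k' hk' j hj r hr y hy
    exact ⟨1, G.one_mem, one_mem_GLFil Mf k', by simpa using hMf hj hr⟩
  | succ m ih =>
    intro k' hk' j hj r hr y hy
    by_cases hjle : j ≤ N + k' + d
    · exact ⟨1, G.one_mem, one_mem_GLFil Mf k', by simpa using hMf hjle hr⟩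
    have hj1 : 1 ≤ j := by omega
    have hk'1 : 1 ≤ k' := by omega
    obtain ⟨x, ⟨ξ, hξT, hξE, rfl⟩, hrx⟩ := hTz k' hk'1 hr j hj1
    by_cases htop : ordM Mf (ξ z) = ⊤
    · refine ⟨1, G.one_mem, one_mem_GLFil Mf k', ?_⟩
      have hξz : ξ z ∈ Mf j := mem_of_le_ordM Mf hMf0 hMf _ j (htop ▸ le_top)
      simpa using add_mem hrx hξz
    · obtain ⟨u₁, hu₁G, hu₁GL, hord⟩ := (hLie k' hk'1).1 ξ hξT hξE z
      have hord' := hord (lt_top_iff_ne_top.mpr htop)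
      -- the correction term has high order
      have h2 : ((u₁ : Module.End 𝕜 M) - 1 - ξ) z ∈ Mf (N + (k' + 1) + d) := by
        refine mem_of_le_ordM Mf hMf0 hMf _ _ (le_trans ?_ hord')
        have hξord : (k' : ℕ∞) ≤ ordE Mf ξ := le_ordE_of_mem Mf hξE
        calc ((N + (k' + 1) + d : ℕ) : ℕ∞) ≤ ((2 * k' + d : ℕ) : ℕ∞) := by
              exact_mod_cast (by omega : N + (k' + 1) + d ≤ 2 * k' + d)
          _ = 2 * (k' : ℕ∞) + (d : ℕ∞) := by push_cast; ring
          _ ≤ 2 * ordE Mf ξ + ordM Mf z := by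
              rw [hz]; exact add_le_add (mul_le_mul_right hξord 2) le_rfl
      have h3 : ((u₁ : Module.End 𝕜 M) - 1) (y - z) ∈ Mf (N + (k' + 1) + d) :=
        hMf (by omega) (hu₁GL.2.2.1 (d + k) (y - z) hy)
      have h1 : r - ξ z ∈ Mf (N + (k' + 1) + d) := hMf (by omega) hrx
      have hr' : r - ((u₁ : Module.End 𝕜 M) y - y) ∈ Mf (N + (k' + 1) + d) := by
        have he : r - ((u₁ : Module.End 𝕜 M) y - y) =
            (r - ξ z) - ((u₁ : Module.End 𝕜 M) - 1 - ξ) z -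
            ((u₁ : Module.End 𝕜 M) - 1) (y - z) := by
          simp only [LinearMap.sub_apply, Module.End.one_apply, map_sub]
          abel
        rw [he]
        exact sub_mem (sub_mem h1 h2) h3
      have hyd : y ∈ Mf d := by
        have : y = (y - z) + z := by abel
        rw [this]
        exact add_mem (hMf (by omega) hy) hzd
      have hy' : (u₁ : Module.End 𝕜 M) y - z ∈ Mf (d + k) := by
        have he : (u₁ : Module.End 𝕜 M) y - z =
            ((u₁ : Module.End 𝕜 M) - 1) y + (y - z) := by
          simp only [LinearMap.sub_apply, Module.End.one_apply]; abel
        rw [he]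
        exact add_mem (hMf (by omega) (hu₁GL.2.2.1 d y hyd)) hy
      obtain ⟨u₂, hu₂G, hu₂GL, hu₂⟩ := ih (k' + 1) (by omega) j (by omega)
        _ hr' ((u₁ : Module.End 𝕜 M) y) hy'
      refine ⟨u₂ * u₁, G.mul_mem hu₂G hu₁G,
        GLFil_mul Mf (GLFil_anti Mf hMf (by omega) hu₂GL) hu₁GL, ?_⟩
      have he : r - (((u₂ * u₁ : (Module.End 𝕜 M)ˣ) : Module.End 𝕜 M) y - y) =
          (r - ((u₁ : Module.End 𝕜 M) y - y)) -
          ((u₂ : Module.End 𝕜 M) ((u₁ : Module.End 𝕜 M) y) - (u₁ : Module.End 𝕜 M) y) := by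
        simp only [Units.val_mul, Module.End.mul_apply]
        abel
      rw [he]
      exact hu₂

/-- if the pair `(T, G^{(1)})` is pointwise of weak Lie type, `z ∈ M` has
finite order `d`, and for every `k ≥ 1` the closure of `T^{(k)}(z)` contains `M_{N+k+d}`,
then for every `k > N` the closure of the orbit `G^{(k)}z` contains `{z} + M_{N+k+d}`. -/
theorem statement10 (Mf : ℕ → Submodule 𝕜 M) (hMf0 : Mf 0 = ⊤) (hMf : Antitone Mf)
    (G : Subgroup (Module.End 𝕜 M)ˣ)
    (hG : (G : Set (Module.End 𝕜 M)ˣ) ⊆ GLFil Mf 1)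
    (T : Submodule 𝕜 (Module.End 𝕜 M)) (hT : T ≤ EndS Mf 1)
    (hLie : IsPointwiseWeakLie Mf T G)
    (z : M) (d : ℕ) (hz : ordM Mf z = (d : ℕ∞)) (N : ℕ)
    (hTz : ∀ k : ℕ, 1 ≤ k → ↑(Mf (N + k + d)) ⊆ clFil Mf (TOrbit Mf T k z)) :
    ∀ k : ℕ, N < k → ∀ w ∈ Mf (N + k + d), z + w ∈ clFil Mf (GOrbit Mf G k z) := by
  intro k hk w hw j hj
  obtain ⟨u, huG, huGL, hu⟩ := statement10_aux Mf hMf0 hMf G T hLie z d hz N hTz k hk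
    j k le_rfl j (by omega) w hw z (by simpa using (Mf (d + k)).zero_mem)
  refine ⟨(u : Module.End 𝕜 M) z, ⟨u, huG, huGL, rfl⟩, ?_⟩
  have he : z + w - (u : Module.End 𝕜 M) z = w - ((u : Module.End 𝕜 M) z - z) := by abel
  rw [he]
  exact hu
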